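/- Let T : X → X be a bounded operator on a real Banach space X. Then ‖exp(−αT)‖ ≤ 1 for all α ≥ 0 if and only if for every x ∈ X and every norming functional x* for x one has x*(Tx) ≥ 0. -/

import Mathlib

/-!
If `exp (-tT)` is a contraction for `t ≥ 0` and `f` is a norming functional for `x`, then
`t ↦ f (exp (-tT) x)` is bounded by its value `‖x‖²` at `t = 0` on `[0, ∞)`, so its derivative
`-f (T x)` at `0` is nonpositive.

Conversely, pairing `x + sT x` with a norming functional of `x` gives `‖x‖ ≤ ‖(1 + sT) x‖` for
`s ≥ 0`, hence `‖exp (-sT)‖ ≤ ‖(1 + sT) exp (-sT)‖ = 1 + o(s)`, because `(1 + sT) exp (-sT)` has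
derivative `T - T = 0` at `s = 0`. Writing `exp (-αT) = exp (-(α/n)T)ⁿ` with `n` large yields
`‖exp (-αT)‖ ≤ (1 + εα/n)ⁿ ≤ exp (εα)` for every `ε > 0`.
-/

open NormedSpace Filter Topology Asymptotics

def IsNumericallyPositive {X : Type*} [NormedAddCommGroup X] [NormedSpace ℝ X]
    (T : X →L[ℝ] X) : Prop :=
  ∀ (x : X) (f : X →L[ℝ] ℝ), ‖f‖ = ‖x‖ → f x = ‖x‖ ^ 2 → 0 ≤ f (T x)

section

variable {X : Type*} [NormedAddCommGroup X] [NormedSpace ℝ X]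

lemma exists_norming_functional (x : X) : ∃ f : X →L[ℝ] ℝ, ‖f‖ = ‖x‖ ∧ f x = ‖x‖ ^ 2 := by
  rcases eq_or_ne ‖x‖ 0 with hx | hx
  · exact ⟨0, by simp [hx], by simp [hx]⟩
  obtain ⟨g, hg, hgx⟩ := exists_dual_vector ℝ x hx
  exact ⟨‖x‖ • g, by simp [norm_smul, hg], by simp [hgx, sq]⟩

lemma IsNumericallyPositive.norm_le_norm_add_smul {T : X →L[ℝ] X} (hT : IsNumericallyPositive T)
    {s : ℝ} (hs : 0 ≤ s) (x : X) : ‖x‖ ≤ ‖x + s • T x‖ := by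
  obtain ⟨f, hf, hfx⟩ := exists_norming_functional x
  have key : ‖x‖ * ‖x‖ ≤ ‖x‖ * ‖x + s • T x‖ :=
    calc ‖x‖ * ‖x‖ = f x := by rw [hfx, sq]
      _ ≤ f x + s * f (T x) := le_add_of_nonneg_right (mul_nonneg hs (hT x f hf hfx))
      _ = f (x + s • T x) := by simp
      _ ≤ ‖f‖ * ‖x + s • T x‖ := (Real.le_norm_self _).trans (f.le_opNorm _)
      _ = ‖x‖ * ‖x + s • T x‖ := by rw [hf]
  rcases (norm_nonneg x).eq_or_lt with hx | hx
  · rw [← hx]; exact norm_nonneg _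
  · exact le_of_mul_le_mul_left key hx

lemma ContinuousLinearMap.opNorm_le_opNorm_comp_of_norm_le {𝕜 E F G : Type*}
    [NontriviallyNormedField 𝕜] [SeminormedAddCommGroup E] [SeminormedAddCommGroup F]
    [SeminormedAddCommGroup G] [NormedSpace 𝕜 E] [NormedSpace 𝕜 F] [NormedSpace 𝕜 G]
    {B : F →L[𝕜] G} (hB : ∀ y, ‖y‖ ≤ ‖B y‖) (C : E →L[𝕜] F) : ‖C‖ ≤ ‖B.comp C‖ :=
  C.opNorm_le_bound (norm_nonneg _) fun x => (hB (C x)).trans ((B.comp C).le_opNorm x)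

lemma IsNumericallyPositive.norm_exp_neg_smul_le {T : X →L[ℝ] X} (hT : IsNumericallyPositive T)
    {s : ℝ} (hs : 0 ≤ s) :
    ‖exp (-(s • T))‖ ≤ 1 + ‖(1 + s • T) * exp (-(s • T)) - 1‖ :=
  calc ‖exp (-(s • T))‖ ≤ ‖(1 + s • T) * exp (-(s • T))‖ :=
        ContinuousLinearMap.opNorm_le_opNorm_comp_of_norm_le (hT.norm_le_norm_add_smul hs) _
    _ ≤ ‖(1 : X →L[ℝ] X)‖ + ‖(1 + s • T) * exp (-(s • T)) - 1‖ := norm_le_norm_add_norm_sub' _ _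
    _ ≤ 1 + ‖(1 + s • T) * exp (-(s • T)) - 1‖ := by
        gcongr; exact ContinuousLinearMap.norm_id_le

variable [CompleteSpace X]

lemma isLittleO_one_add_smul_mul_exp_neg_smul_sub_one (T : X →L[ℝ] X) :
    (fun s : ℝ => (1 + s • T) * exp (-(s • T)) - 1) =o[𝓝 0] fun s => s := by
  have hlin : HasDerivAt (fun s : ℝ => 1 + s • T) T 0 := by
    simpa using ((hasDerivAt_id (0 : ℝ)).smul_const T).const_add 1
  have hexp : HasDerivAt (fun s : ℝ => exp (-(s • T))) (-T) 0 := by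
    simpa using hasDerivAt_exp_smul_const (-T) (0 : ℝ)
  simpa using (hlin.mul hexp).isLittleO

lemma exp_neg_smul_eq_pow (T : X →L[ℝ] X) (α : ℝ) {n : ℕ} (hn : n ≠ 0) :
    exp (-(α • T)) = exp (-((α / n) • T)) ^ n := by
  let _ : NormedAlgebra ℚ (X →L[ℝ] X) := .restrictScalars ℚ ℝ (X →L[ℝ] X)
  rw [← exp_nsmul, ← Nat.cast_smul_eq_nsmul ℝ, smul_neg, smul_smul,
    mul_div_cancel₀ _ (Nat.cast_ne_zero.mpr hn)]

lemma IsNumericallyPositive.norm_exp_neg_smul_le_exp_mul {T : X →L[ℝ] X}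
    (hT : IsNumericallyPositive T) {α ε : ℝ} (hα : 0 ≤ α) (hε : 0 < ε) :
    ‖exp (-(α • T))‖ ≤ Real.exp (ε * α) := by
  have hsmall : ∀ᶠ n : ℕ in atTop,
      ‖(1 + (α / n) • T) * exp (-((α / n) • T)) - 1‖ ≤ ε * ‖α / n‖ :=
    (tendsto_const_div_atTop_nhds_zero_nat α).eventually
      ((isLittleO_one_add_smul_mul_exp_neg_smul_sub_one T).bound hε)
  obtain ⟨n, hbound, hn0⟩ := (hsmall.and (eventually_ne_atTop 0)).exists
  have hs : 0 ≤ α / n := by positivity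
  rw [Real.norm_of_nonneg hs] at hbound
  calc ‖exp (-(α • T))‖ = ‖exp (-((α / n) • T)) ^ n‖ := by rw [exp_neg_smul_eq_pow T α hn0]
    _ ≤ ‖exp (-((α / n) • T))‖ ^ n := norm_pow_le' _ (Nat.pos_of_ne_zero hn0)
    _ ≤ (1 + ε * (α / n)) ^ n := by
        gcongr
        exact (hT.norm_exp_neg_smul_le hs).trans (by linarith)
    _ ≤ Real.exp (ε * (α / n)) ^ n := by gcongr; linarith [Real.add_one_le_exp (ε * (α / n))]
    _ = Real.exp (ε * α) := by
        rw [← Real.exp_nat_mul]; congr 1; field_simp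

lemma IsNumericallyPositive.norm_exp_neg_smul_le_one {T : X →L[ℝ] X}
    (hT : IsNumericallyPositive T) {α : ℝ} (hα : 0 ≤ α) : ‖exp (-(α • T))‖ ≤ 1 := by
  have hlim : Tendsto (fun ε => Real.exp (ε * α)) (𝓝[>] 0) (𝓝 1) := by
    have hcont : Continuous fun ε : ℝ => Real.exp (ε * α) := by fun_prop
    simpa using (hcont.tendsto 0).mono_left nhdsWithin_le_nhds
  exact ge_of_tendsto hlim (eventually_mem_nhdsWithin.mono fun ε hε =>
    hT.norm_exp_neg_smul_le_exp_mul hα hε)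

lemma isNumericallyPositive_of_norm_exp_neg_smul_le_one {T : X →L[ℝ] X}
    (h : ∀ α : ℝ, 0 ≤ α → ‖exp (-(α • T))‖ ≤ 1) : IsNumericallyPositive T := by
  intro x f hf hfx
  set g : ℝ → ℝ := fun t => f (exp (-(t • T)) x)
  have hderiv : HasDerivAt g (-f (T x)) 0 := by
    have := (hasDerivAt_exp_smul_const (-T) (0 : ℝ)).clm_apply (hasDerivAt_const 0 x)
    simpa [Function.comp_def] using f.hasFDerivAt.comp_hasDerivAt 0 this
  have hmax : IsLocalMaxOn g (Set.Ici 0) 0 := by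
    refine IsMaxOn.localize fun t (ht : 0 ≤ t) => ?_
    calc g t ≤ ‖f‖ * (‖exp (-(t • T))‖ * ‖x‖) :=
          (Real.le_norm_self _).trans (f.le_opNorm_of_le ((exp (-(t • T))).le_opNorm x))
      _ ≤ ‖x‖ * (1 * ‖x‖) := by
          rw [hf]; gcongr; exact h t ht
      _ = g 0 := by simp [g, hfx, sq]
  have hnonpos := hmax.hasFDerivWithinAt_nonpos hderiv.hasFDerivAt.hasFDerivWithinAt
    (y := 1) (mem_posTangentConeAt_of_segment_subset (by simp [Set.Icc_subset_Ici_self]))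
  simpa using hnonpos

end

/-- Lumer–Phillips: `‖exp(−αT)‖ ≤ 1` for all `α ≥ 0` iff every norming
functional of every point is nonnegative on `T`. -/
theorem stmt1 {X : Type*} [NormedAddCommGroup X] [NormedSpace ℝ X] [CompleteSpace X]
    (T : X →L[ℝ] X) :
    (∀ α : ℝ, 0 ≤ α → ‖NormedSpace.exp (-(α • T))‖ ≤ 1) ↔
      (∀ (x : X) (f : X →L[ℝ] ℝ), ‖f‖ = ‖x‖ → f x = ‖x‖ ^ 2 → 0 ≤ f (T x)) :=
  ⟨isNumericallyPositive_of_norm_exp_neg_smul_le_one,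
    fun hT _ hα => IsNumericallyPositive.norm_exp_neg_smul_le_one hT hα⟩
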